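/- Let n ≥ 1 and let B be a lattice polyhedron in ℝ^n. Then the relative mixed volume of n copies of B equals the lattice volume of C \ B; that is, MV(B, …, B) = n! · vol(C \ B), where vol is Lebesgue measure. -/

import Mathlib

/-!
For convex `B` the Minkowski sum of `k ≥ 1` copies of `B` is `k • B`, and since the orthant is a
cone, `C \ k • B = k • (C \ B)` has volume `k ^ n · vol (C \ B)`. Hence
`MV (B, …, B) = vol (C \ B) · ∑ₖ (-1) ^ (n - k) (n choose k) k ^ n`, and this alternating sum is the
`n`-th forward difference of `x ↦ x ^ n`, which is `n!`.
-/

open Pointwise MeasureTheory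

noncomputable section

/-- The positive (closed) orthant in `ℝ^n`. -/
def orthant (n : ℕ) : Set (Fin n → ℝ) := {x | ∀ i, 0 ≤ x i}

/-- The standard basis vector `e m`. -/
def stdVec {n : ℕ} (m : Fin n) : Fin n → ℝ := Pi.single m 1

/-- A lattice polyhedron: the Minkowski sum of the convex hull of a finite nonempty set of
points with nonnegative integer coordinates and the positive orthant. -/
def IsLatticePolyhedron {n : ℕ} (B : Set (Fin n → ℝ)) : Prop :=
  ∃ F : Finset (Fin n → ℝ), F.Nonempty ∧
    (∀ p ∈ F, ∀ i, ∃ m : ℕ, p i = (m : ℝ)) ∧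
    B = convexHull ℝ (↑F) + orthant n

/-- The relative mixed volume of the pairs `(C, B 1), …, (C, B n)`. -/
def MV {n : ℕ} (B : Fin n → Set (Fin n → ℝ)) : ℝ :=
  ∑ I ∈ Finset.univ.powerset.filter (fun I : Finset (Fin n) => I.Nonempty),
    (-1 : ℝ) ^ (n - I.card) * (volume (orthant n \ ∑ i ∈ I, B i)).toReal

/-- The polyhedron `C_{a_1,…,a_n} = conv({a_1 e_1, …, a_n e_n}) + C`. -/
def Caf {n : ℕ} (a : Fin n → ℝ) : Set (Fin n → ℝ) :=
  convexHull ℝ (Set.range fun i : Fin n => Pi.single i (a i)) + orthant n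

/-- A tuple of polyhedra is minimal with mixed volume `V`. -/
def IsMinimalTuple {n : ℕ} (B : Fin n → Set (Fin n → ℝ)) (V : ℝ) : Prop :=
  MV B = V ∧ ∀ i : Fin n, ∀ δ : Fin n → ℝ,
    (∀ j, ∃ m : ℤ, δ j = (m : ℝ)) → δ ∈ orthant n → δ ∉ B i →
    MV (Function.update B i (convexHull ℝ (B i ∪ {δ}))) < V

open Finset fwdDiff

theorem sum_range_neg_one_pow_mul_choose_mul_pow_self {R : Type*} [CommRing R] (n : ℕ) :
    ∑ k ∈ range (n + 1), (-1 : R) ^ (n - k) * n.choose k * (k : R) ^ n = n.factorial := by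
  have h := congr_fun (fwdDiff_iter_eq_factorial (R := R) (n := n)) 0
  rw [fwdDiff_iter_eq_sum_shift] at h
  simpa [zsmul_eq_mul] using h

theorem sum_powerset_neg_one_pow_mul_card_pow {α R : Type*} [CommRing R] (s : Finset α) :
    ∑ I ∈ s.powerset, (-1 : R) ^ (#s - #I) * (#I : R) ^ #s = (#s).factorial := by
  rw [sum_powerset_apply_card (fun k => (-1 : R) ^ (#s - k) * (k : R) ^ #s),
    ← sum_range_neg_one_pow_mul_choose_mul_pow_self]
  refine sum_congr rfl fun k _ => ?_
  rw [nsmul_eq_mul]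
  ring

theorem Convex.nsmul_eq_smul {E : Type*} [AddCommGroup E] [Module ℝ E] {B : Set E}
    (hB : Convex ℝ B) {k : ℕ} (hk : k ≠ 0) : k • B = (k : ℝ) • B := by
  induction k with
  | zero => exact absurd rfl hk
  | succ k ih =>
    rcases eq_or_ne k 0 with rfl | hk
    · simp
    rw [succ_nsmul, ih hk, Nat.cast_succ, hB.add_smul k.cast_nonneg zero_le_one, one_smul]

theorem orthant_eq_Ici (n : ℕ) : orthant n = Set.Ici 0 := by
  ext x
  simp [orthant, Pi.le_def]

theorem convex_orthant (n : ℕ) : Convex ℝ (orthant n) :=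
  orthant_eq_Ici n ▸ convex_Ici 0

theorem smul_orthant {n : ℕ} {c : ℝ} (hc : 0 < c) : c • orthant n = orthant n := by
  ext x
  simp only [Set.mem_smul_set_iff_inv_smul_mem₀ hc.ne', orthant, Set.mem_ofPred_eq,
    Pi.smul_apply, smul_eq_mul, mul_nonneg_iff_of_pos_left (inv_pos.mpr hc)]

theorem IsLatticePolyhedron.convex {n : ℕ} {B : Set (Fin n → ℝ)} (hB : IsLatticePolyhedron B) :
    Convex ℝ B := by
  obtain ⟨F, -, -, rfl⟩ := hB
  exact (convex_convexHull ℝ _).add (convex_orthant n)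

theorem volume_orthant_sdiff_smul {n : ℕ} (B : Set (Fin n → ℝ)) {c : ℝ} (hc : 0 < c) :
    (volume (orthant n \ c • B)).toReal = c ^ n * (volume (orthant n \ B)).toReal := by
  rw [← smul_orthant hc, ← Set.smul_set_sdiff₀ hc.ne', smul_orthant hc,
    Measure.addHaar_smul_of_nonneg volume hc.le, Module.finrank_fin_fun, ENNReal.toReal_mul,
    ENNReal.toReal_ofReal (by positivity)]

theorem volume_orthant_sdiff_sum_const {n : ℕ} {B : Set (Fin n → ℝ)} (hB : Convex ℝ B)
    {I : Finset (Fin n)} (hI : I.Nonempty) :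
    (volume (orthant n \ ∑ _i ∈ I, B)).toReal = (#I : ℝ) ^ n * (volume (orthant n \ B)).toReal := by
  rw [sum_const, hB.nsmul_eq_smul hI.card_pos.ne', volume_orthant_sdiff_smul B (by simpa using hI)]

theorem stmt_17 {n : ℕ} (hn : 1 ≤ n) (B : Set (Fin n → ℝ))
    (hB : IsLatticePolyhedron B) :
    MV (fun _ : Fin n => B) = (n.factorial : ℝ) * (volume (orthant n \ B)).toReal := by
  have hsum : ∑ I ∈ univ.powerset.filter (fun I : Finset (Fin n) => I.Nonempty),
      (-1 : ℝ) ^ (n - #I) * (#I : ℝ) ^ n = n.factorial := by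
    rw [sum_filter_of_ne fun I _ hI => ?_]
    · simpa using sum_powerset_neg_one_pow_mul_card_pow (R := ℝ) (univ : Finset (Fin n))
    · refine nonempty_iff_ne_empty.mpr fun hIe => hI ?_
      simp [hIe, zero_pow (by omega : n ≠ 0)]
  rw [MV, ← hsum, sum_mul]
  refine sum_congr rfl fun I hI => ?_
  rw [volume_orthant_sdiff_sum_const hB.convex (mem_filter.mp hI).2, mul_assoc]
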